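/- arXiv:2301.02812 — 2 statements merged into one kernel-verified Lean document; each statement's English description precedes it below -/
import Mathlib

section
/- Let d ≥ 1 and suppose P⁰, P^d are symmetric matrices satisfying the reduced pair of equations P⁰ = (A^d)'P^dA^d + Σ_{k=0}^{d−1}(A^k)'Ā'P⁰ĀA^k + Σ_{k=0}^{d−1}(A^k)'QA^k and P^d = (A−BK)'P^d(A−BK) + (Ā−B̄K)'P⁰(Ā−B̄K) + Q. Define P^{i−1} := (A^{d−i+1})'P^dA^{d−i+1} + Σ_{k=0}^{d−i}(A^k)'Ā'P⁰ĀA^k + Σ_{k=0}^{d−i}(A^k)'QA^k for i = 1,…,d. Then P⁰,…,P^d satisfy the full system P^{i−1} = A'PⁱA + Ā'P⁰Ā + Q for i = 1,…,d−1 and P^d = (A−BK)'P^d(A−BK) + (Ā−B̄K)'P⁰(Ā−B̄K) + Q. -/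
open Matrix Finset

lemma myConjPow {n : ℕ} (A M : Matrix (Fin n) (Fin n) ℝ) (k : ℕ) :
    Aᵀ * ((A ^ k)ᵀ * M * A ^ k) * A = (A ^ (k + 1))ᵀ * M * A ^ (k + 1) := by
  rw [pow_succ, Matrix.transpose_mul]
  noncomm_ring

/-- Sufficiency direction of Remark 4: a solution of the reduced pair of equations, extended
via the closed-form definition of `P^{i−1}`, solves the full chain of coupled
Lyapunov-type equations. -/
theorem stmt3 {n m : ℕ} (d : ℕ) (hd : 1 ≤ d)
    (A Ab Q : Matrix (Fin n) (Fin n) ℝ) (hQ : Q.IsSymm)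
    (B Bb : Matrix (Fin n) (Fin m) ℝ) (K : Matrix (Fin m) (Fin n) ℝ)
    (P : ℕ → Matrix (Fin n) (Fin n) ℝ)
    (hP0symm : (P 0).IsSymm) (hPdsymm : (P d).IsSymm)
    (hP0 : P 0 = (A ^ d)ᵀ * P d * A ^ d
        + ∑ k ∈ Finset.range d, (A ^ k)ᵀ * Abᵀ * P 0 * Ab * A ^ k
        + ∑ k ∈ Finset.range d, (A ^ k)ᵀ * Q * A ^ k)
    (hPd : P d = (A - B * K)ᵀ * P d * (A - B * K)
        + (Ab - Bb * K)ᵀ * P 0 * (Ab - Bb * K) + Q)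
    (hdef : ∀ i, 1 ≤ i → i ≤ d →
      P (i - 1) = (A ^ (d - i + 1))ᵀ * P d * A ^ (d - i + 1)
        + ∑ k ∈ Finset.range (d - i + 1), (A ^ k)ᵀ * Abᵀ * P 0 * Ab * A ^ k
        + ∑ k ∈ Finset.range (d - i + 1), (A ^ k)ᵀ * Q * A ^ k) :
    (∀ i, 1 ≤ i → i ≤ d - 1 →
      P (i - 1) = Aᵀ * P i * A + Abᵀ * P 0 * Ab + Q) ∧
    P d = (A - B * K)ᵀ * P d * (A - B * K)
        + (Ab - Bb * K)ᵀ * P 0 * (Ab - Bb * K) + Q := by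
  refine ⟨?_, hPd⟩
  intro i hi1 hid
  have h1 := hdef i hi1 (by omega)
  have h2 := hdef (i + 1) (by omega) (by omega)
  simp only [Nat.add_sub_cancel] at h2
  have e1 : d - (i + 1) + 1 = d - i := by omega
  rw [e1] at h2
  rw [h1, h2]
  set j := d - i with hj
  rw [Finset.sum_range_succ' _ j, Finset.sum_range_succ' _ j]
  have key : ∀ (M : Matrix (Fin n) (Fin n) ℝ) (k : ℕ),
      Aᵀ * ((A ^ k)ᵀ * M * A ^ k) * A = (A ^ (k + 1))ᵀ * M * A ^ (k + 1) :=
    fun M k => myConjPow A M k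
  have expand : Aᵀ * ((A ^ j)ᵀ * P d * A ^ j
        + ∑ k ∈ Finset.range j, (A ^ k)ᵀ * Abᵀ * P 0 * Ab * A ^ k
        + ∑ k ∈ Finset.range j, (A ^ k)ᵀ * Q * A ^ k) * A
      = Aᵀ * ((A ^ j)ᵀ * P d * A ^ j) * A
        + ∑ k ∈ Finset.range j, Aᵀ * ((A ^ k)ᵀ * Abᵀ * P 0 * Ab * A ^ k) * A
        + ∑ k ∈ Finset.range j, Aᵀ * ((A ^ k)ᵀ * Q * A ^ k) * A := by
    simp only [mul_add, add_mul, Finset.mul_sum, Finset.sum_mul]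
  have s1 : ∑ k ∈ Finset.range j, Aᵀ * ((A ^ k)ᵀ * Abᵀ * P 0 * Ab * A ^ k) * A
      = ∑ k ∈ Finset.range j, (A ^ (k + 1))ᵀ * Abᵀ * P 0 * Ab * A ^ (k + 1) := by
    refine Finset.sum_congr rfl fun k _ => ?_
    simpa [mul_assoc] using key (Abᵀ * P 0 * Ab) k
  have s2 : ∑ k ∈ Finset.range j, Aᵀ * ((A ^ k)ᵀ * Q * A ^ k) * A
      = ∑ k ∈ Finset.range j, (A ^ (k + 1))ᵀ * Q * A ^ (k + 1) :=
    Finset.sum_congr rfl fun k _ => key Q k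
  rw [expand, key (P d) j, s1, s2]
  simp only [pow_zero, Matrix.transpose_one, Matrix.one_mul, Matrix.mul_one]
  abel
end

section
/- With the notation of the policy-iteration identity: if P_j⁰,…,P_j^d solve the Lyapunov-type equations P_j^{i−1} = A'P_jⁱA + Ā'P_j⁰Ā + Q (i = 1,…,d−1) and P_j^d = (A−BK_j)'P_j^d(A−BK_j) + (Ā−B̄K_j)'P_j⁰(Ā−B̄K_j) + K_j'RK_j + Q, and P_{j+1}⁰,…,P_{j+1}^d solve the same equations with K_j replaced by K_{j+1} = (R + B'P_j^dB + B̄'P_j⁰B̄)⁻¹(B'P_j^dA + B̄'P_j⁰Ā), then the differences δPⁱ = P_jⁱ − P_{j+1}ⁱ solve: δP^{i−1} = A'δPⁱA + Ā'δP⁰Ā for i = 1,…,d−1, and δP^d = (A−BK_{j+1})'δP^d(A−BK_{j+1}) + (Ā−B̄K_{j+1})'δP⁰(Ā−B̄K_{j+1}) + (K_{j+1}−K_j)'N_{j+1}(K_{j+1}−K_j), where N_{j+1} = R + B'P_j^dB + B̄'P_j⁰B̄. -/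
open Matrix

/-- Difference equations for consecutive policy-iteration solutions: the differences
`δPⁱ = P_jⁱ − P_{j+1}ⁱ` satisfy homogeneous Lyapunov-type equations driven by
`(K_{j+1}−K_j)'N_{j+1}(K_{j+1}−K_j)`. -/
theorem stmt5 {n m : ℕ} (d : ℕ) (hd : 1 ≤ d)
    (A Ab Q : Matrix (Fin n) (Fin n) ℝ) (B Bb : Matrix (Fin n) (Fin m) ℝ)
    (R : Matrix (Fin m) (Fin m) ℝ) (Kj Kj1 : Matrix (Fin m) (Fin n) ℝ)
    (Pj Pj1 : ℕ → Matrix (Fin n) (Fin n) ℝ)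
    (hQ : Q.IsSymm) (hR : R.IsSymm)
    (hPjsymm : ∀ i ≤ d, (Pj i).IsSymm) (hPj1symm : ∀ i ≤ d, (Pj1 i).IsSymm)
    (hNunit : IsUnit (R + Bᵀ * Pj d * B + Bbᵀ * Pj 0 * Bb))
    (hKj1 : Kj1 = (R + Bᵀ * Pj d * B + Bbᵀ * Pj 0 * Bb)⁻¹
        * (Bᵀ * Pj d * A + Bbᵀ * Pj 0 * Ab))
    (hchainj : ∀ i, 1 ≤ i → i ≤ d - 1 →
      Pj (i - 1) = Aᵀ * Pj i * A + Abᵀ * Pj 0 * Ab + Q)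
    (hPjd : Pj d = (A - B * Kj)ᵀ * Pj d * (A - B * Kj)
        + (Ab - Bb * Kj)ᵀ * Pj 0 * (Ab - Bb * Kj) + Kjᵀ * R * Kj + Q)
    (hchainj1 : ∀ i, 1 ≤ i → i ≤ d - 1 →
      Pj1 (i - 1) = Aᵀ * Pj1 i * A + Abᵀ * Pj1 0 * Ab + Q)
    (hPj1d : Pj1 d = (A - B * Kj1)ᵀ * Pj1 d * (A - B * Kj1)
        + (Ab - Bb * Kj1)ᵀ * Pj1 0 * (Ab - Bb * Kj1) + Kj1ᵀ * R * Kj1 + Q) :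
    (∀ i, 1 ≤ i → i ≤ d - 1 →
      Pj (i - 1) - Pj1 (i - 1)
        = Aᵀ * (Pj i - Pj1 i) * A + Abᵀ * (Pj 0 - Pj1 0) * Ab) ∧
    Pj d - Pj1 d
      = (A - B * Kj1)ᵀ * (Pj d - Pj1 d) * (A - B * Kj1)
        + (Ab - Bb * Kj1)ᵀ * (Pj 0 - Pj1 0) * (Ab - Bb * Kj1)
        + (Kj1 - Kj)ᵀ * (R + Bᵀ * Pj d * B + Bbᵀ * Pj 0 * Bb) * (Kj1 - Kj) := by
  constructor
  · intro i h1 h2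
    rw [hchainj i h1 h2, hchainj1 i h1 h2]
    noncomm_ring
  · have hP : (Pj d)ᵀ = Pj d := hPjsymm d le_rfl
    have hP0 : (Pj 0)ᵀ = Pj 0 := hPjsymm 0 (Nat.zero_le d)
    have hRs : Rᵀ = R := hR
    have hNs : (R + Bᵀ * Pj d * B + Bbᵀ * Pj 0 * Bb)ᵀ
        = R + Bᵀ * Pj d * B + Bbᵀ * Pj 0 * Bb := by
      simp [Matrix.transpose_add, Matrix.transpose_mul, hRs, hP, hP0, Matrix.mul_assoc]
    have hdet : IsUnit (R + Bᵀ * Pj d * B + Bbᵀ * Pj 0 * Bb).det :=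
      (Matrix.isUnit_iff_isUnit_det _).mp hNunit
    have hS : (R + Bᵀ * Pj d * B + Bbᵀ * Pj 0 * Bb) * Kj1
        = Bᵀ * Pj d * A + Bbᵀ * Pj 0 * Ab := by
      rw [hKj1, Matrix.mul_nonsing_inv_cancel_left _ _ hdet]
    have hT : Kj1ᵀ * (R + Bᵀ * Pj d * B + Bbᵀ * Pj 0 * Bb)
        = Aᵀ * Pj d * B + Abᵀ * Pj 0 * Bb := by
      have h := congrArg Matrix.transpose hS
      rw [Matrix.transpose_mul, hNs] at h
      rw [h]
      simp [Matrix.transpose_add, Matrix.transpose_mul, hP, hP0, Matrix.mul_assoc]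
    have h1 : Pj d - ((A - B * Kj)ᵀ * Pj d * (A - B * Kj)
        + (Ab - Bb * Kj)ᵀ * Pj 0 * (Ab - Bb * Kj) + Kjᵀ * R * Kj + Q) = 0 :=
      sub_eq_zero.mpr hPjd
    have h2 : Pj1 d - ((A - B * Kj1)ᵀ * Pj1 d * (A - B * Kj1)
        + (Ab - Bb * Kj1)ᵀ * Pj1 0 * (Ab - Bb * Kj1) + Kj1ᵀ * R * Kj1 + Q) = 0 :=
      sub_eq_zero.mpr hPj1d
    have hS0 : Bᵀ * Pj d * A + Bbᵀ * Pj 0 * Ab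
        - (R + Bᵀ * Pj d * B + Bbᵀ * Pj 0 * Bb) * Kj1 = 0 := sub_eq_zero.mpr hS.symm
    have hT0 : Aᵀ * Pj d * B + Abᵀ * Pj 0 * Bb
        - Kj1ᵀ * (R + Bᵀ * Pj d * B + Bbᵀ * Pj 0 * Bb) = 0 := sub_eq_zero.mpr hT.symm
    rw [← sub_eq_zero]
    have key : Pj d - Pj1 d
        - ((A - B * Kj1)ᵀ * (Pj d - Pj1 d) * (A - B * Kj1)
          + (Ab - Bb * Kj1)ᵀ * (Pj 0 - Pj1 0) * (Ab - Bb * Kj1)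
          + (Kj1 - Kj)ᵀ * (R + Bᵀ * Pj d * B + Bbᵀ * Pj 0 * Bb) * (Kj1 - Kj))
        = (Pj d - ((A - B * Kj)ᵀ * Pj d * (A - B * Kj)
            + (Ab - Bb * Kj)ᵀ * Pj 0 * (Ab - Bb * Kj) + Kjᵀ * R * Kj + Q))
          - (Pj1 d - ((A - B * Kj1)ᵀ * Pj1 d * (A - B * Kj1)
            + (Ab - Bb * Kj1)ᵀ * Pj1 0 * (Ab - Bb * Kj1) + Kj1ᵀ * R * Kj1 + Q))
          + (Kj1 - Kj)ᵀ * (Bᵀ * Pj d * A + Bbᵀ * Pj 0 * Ab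
              - (R + Bᵀ * Pj d * B + Bbᵀ * Pj 0 * Bb) * Kj1)
          + (Aᵀ * Pj d * B + Abᵀ * Pj 0 * Bb
              - Kj1ᵀ * (R + Bᵀ * Pj d * B + Bbᵀ * Pj 0 * Bb)) * (Kj1 - Kj) := by
      simp only [Matrix.transpose_sub, Matrix.transpose_mul, Matrix.transpose_add,
        Matrix.sub_mul, Matrix.mul_sub, Matrix.add_mul, Matrix.mul_add, Matrix.mul_assoc]
      abel
    rw [key, h1, h2, hS0, hT0]
    simp
end
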